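/- arXiv:1203.3307 — 5 statements merged into one kernel-verified Lean document; each statement's English description precedes it below -/
import Mathlib

section
/- If y = (y_x, y_d, y_t, y_b) is a nonzero integer kernel element of the (LRP) constraint matrix A with y_d = 0, and (i,q) is the position of the leftmost nonzero component of y_x with X_{iq} > 0, then there exists p > q in the same subsystem i with X_{ip} < 0, and moreover T_{iq} = −X_{iq} < 0 and T_{ip} = −X_{ip} > 0. -/
/-- The constraint matrix `A = [D, -Iₙ, 0, 0; I_N, 0, I_N, 0; c, 0, 0, 1]` of
the relaxed linear problem (LRP).  Components are indexed by `Fin N`, with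
`s j` the subsystem of component `j`, and `c j` its cost.  Rows are indexed by
`Fin n ⊕ (Fin N ⊕ Unit)` (subsystem constraints, upper-bound constraints, cost
constraint); columns by `Fin N ⊕ (Fin n ⊕ (Fin N ⊕ Unit))` (variables
`x`, `d`, `t`, `b`). -/
def lrpMatrix {n N : ℕ} (s : Fin N → Fin n) (c : Fin N → ℕ) :
    Matrix (Fin n ⊕ (Fin N ⊕ Unit)) (Fin N ⊕ (Fin n ⊕ (Fin N ⊕ Unit))) ℤ :=
  fun row col =>
    match row, col with
    | Sum.inl i, Sum.inl j => if s j = i then 1 else 0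
    | Sum.inl i, Sum.inr (Sum.inl i') => if i' = i then -1 else 0
    | Sum.inl _, Sum.inr (Sum.inr _) => 0
    | Sum.inr (Sum.inl j), Sum.inl j' => if j' = j then 1 else 0
    | Sum.inr (Sum.inl _), Sum.inr (Sum.inl _) => 0
    | Sum.inr (Sum.inl j), Sum.inr (Sum.inr (Sum.inl j')) => if j' = j then 1 else 0
    | Sum.inr (Sum.inl _), Sum.inr (Sum.inr (Sum.inr _)) => 0
    | Sum.inr (Sum.inr _), Sum.inl j => (c j : ℤ)
    | Sum.inr (Sum.inr _), Sum.inr (Sum.inl _) => 0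
    | Sum.inr (Sum.inr _), Sum.inr (Sum.inr (Sum.inl _)) => 0
    | Sum.inr (Sum.inr _), Sum.inr (Sum.inr (Sum.inr _)) => 1

/-- If a nonzero integer kernel element of the (LRP) matrix has `y_d = 0` and
the leftmost nonzero component `X_{iq}` of `y_x` is positive, then there is a
later component `p` of the same subsystem with `X_{ip} < 0`; moreover
`T_{iq} = -X_{iq} < 0` and `T_{ip} = -X_{ip} > 0`. -/
theorem lrp_kernel_dzero_leftmost {n N : ℕ} (s : Fin N → Fin n) (c : Fin N → ℕ)
    (y : Fin N ⊕ (Fin n ⊕ (Fin N ⊕ Unit)) → ℤ)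
    (hy : (lrpMatrix s c).mulVec y = 0)
    (hy0 : y ≠ 0)
    (hd : ∀ i, y (Sum.inr (Sum.inl i)) = 0)
    (q : Fin N) (hq : 0 < y (Sum.inl q))
    (hleft : ∀ j, j < q → y (Sum.inl j) = 0) :
    ∃ p, q < p ∧ s p = s q ∧ y (Sum.inl p) < 0 ∧
      y (Sum.inr (Sum.inr (Sum.inl q))) = - y (Sum.inl q) ∧
      y (Sum.inr (Sum.inr (Sum.inl q))) < 0 ∧
      y (Sum.inr (Sum.inr (Sum.inl p))) = - y (Sum.inl p) ∧
      0 < y (Sum.inr (Sum.inr (Sum.inl p))) := by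
  have hT : ∀ j : Fin N, y (Sum.inr (Sum.inr (Sum.inl j))) = - y (Sum.inl j) := by
    intro j
    have h := congrFun hy (Sum.inr (Sum.inl j))
    simp [Matrix.mulVec, dotProduct, lrpMatrix, Fintype.sum_sum_type,
      Finset.sum_ite_eq', ite_mul] at h
    linarith
  have hsum : ∑ j ∈ Finset.univ.filter (fun j => s j = s q), y (Sum.inl j) = 0 := by
    have h := congrFun hy (Sum.inl (s q))
    simp [Matrix.mulVec, dotProduct, lrpMatrix, Fintype.sum_sum_type, hd,
      Finset.sum_ite_eq', ite_mul, Finset.sum_ite, Finset.filter_eq'] at h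
    convert h using 1
  have hp : ∃ p ∈ Finset.univ.filter (fun j => s j = s q), y (Sum.inl p) < 0 := by
    by_contra hcon
    push_neg at hcon
    have := (Finset.sum_eq_zero_iff_of_nonneg (fun j hj => hcon j hj)).mp hsum q
      (by simp)
    omega
  obtain ⟨p, hpmem, hpneg⟩ := hp
  have hps : s p = s q := by simpa using hpmem
  have hqp : q < p := by
    rcases lt_trichotomy q p with h | h | h
    · exact h
    · subst h; omega
    · have := hleft p h; omega
  exact ⟨p, hqp, hps, hpneg, hT q, by have := hT q; omega, hT p, by have := hT p; omega⟩
end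

section
/- Each binomial x_{iq} t_{ip} − x_{ip} t_{iq} b^{c_{iq} − c_{ip}} with q < p in the same subsystem i and c_{iq} ≥ c_{ip} lies in the toric ideal I_A of the (LRP) constraint matrix A. -/
/-- The binomial `x_{iq} t_{ip} - x_{ip} t_{iq} b^{c_{iq}-c_{ip}}`, for `q < p`
in the same subsystem with `c_{iq} ≥ c_{ip}`, lies in the toric ideal of the
(LRP) constraint matrix: the exponent vectors of its two monomials satisfy
`Aα = Aβ`. -/
theorem binomial_xt_mem_toric {n N : ℕ} (s : Fin N → Fin n) (c : Fin N → ℕ)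
    (q p : Fin N) (hqp : q < p) (hs : s p = s q) (hcc : c p ≤ c q)
    (α β : Fin N ⊕ (Fin n ⊕ (Fin N ⊕ Unit)) → ℤ)
    (hα : α = fun w => (if w = Sum.inl q then 1 else 0) +
        (if w = Sum.inr (Sum.inr (Sum.inl p)) then 1 else 0))
    (hβ : β = fun w => (if w = Sum.inl p then 1 else 0) +
        (if w = Sum.inr (Sum.inr (Sum.inl q)) then 1 else 0) +
        (if w = Sum.inr (Sum.inr (Sum.inr ())) then ((c q - c p : ℕ) : ℤ) else 0)) :
    (lrpMatrix s c).mulVec α = (lrpMatrix s c).mulVec β := by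
  subst hα hβ
  have hne : q ≠ p := ne_of_lt hqp
  funext row
  simp only [Matrix.mulVec, dotProduct, Fintype.sum_sum_type, Finset.univ_unique, Finset.sum_singleton,
    mul_add, Finset.sum_add_distrib, Finset.sum_ite_eq', Finset.mem_univ, if_true,
    mul_ite, mul_one, mul_zero, Finset.sum_ite_eq, lrpMatrix]
  rcases row with i | j | u
  · simp [hs]
  · simp only []
    rcases eq_or_ne j q with rfl | hjq <;> rcases eq_or_ne j p with rfl | hjp <;>
      simp_all <;> omega
  · simp
    omega
end

section
/- Let G = {x_{ik} d_i − t_{ik} b^{c_{ik}} : all i,k} ∪ {x_{iq} t_{ip} − x_{ip} t_{iq} b^{c_{iq}−c_{ip}} : q < p, same i}. Then for every nonzero integer kernel element y of the (LRP) constraint matrix A with y_d ≠ 0 whose first nonzero d-component D_i is positive, there exists k with X_{ik} > 0 and T_{ik} < 0; hence x_{ik} d_i divides the positive-part monomial z^{y⁺} and t_{ik} divides z^{y⁻}. -/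
/-- If `y` is a nonzero integer kernel element of the (LRP) matrix whose first
nonzero `d`-component `D_i` is positive, then there is a component `k` of
subsystem `i` with `X_{ik} > 0` and `T_{ik} < 0`; hence `x_{ik} d_i` divides
the monomial `z^{y⁺}` and `t_{ik}` divides `z^{y⁻}` (exponents at the
corresponding variables are at least `1`). -/
theorem lrp_kernel_d_pos_div {n N : ℕ} (s : Fin N → Fin n) (c : Fin N → ℕ)
    (y : Fin N ⊕ (Fin n ⊕ (Fin N ⊕ Unit)) → ℤ)
    (hy : (lrpMatrix s c).mulVec y = 0) (hy0 : y ≠ 0)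
    (i : Fin n) (hdi : 0 < y (Sum.inr (Sum.inl i)))
    (hfirst : ∀ i', i' < i → y (Sum.inr (Sum.inl i')) = 0) :
    ∃ kk : Fin N, s kk = i ∧
      0 < y (Sum.inl kk) ∧ y (Sum.inr (Sum.inr (Sum.inl kk))) < 0 ∧
      1 ≤ (y (Sum.inl kk)).toNat ∧
      1 ≤ (y (Sum.inr (Sum.inl i))).toNat ∧
      1 ≤ (-(y (Sum.inr (Sum.inr (Sum.inl kk))))).toNat := by
  have hrow1 := congrFun hy (Sum.inl i)
  simp only [Matrix.mulVec, dotProduct, lrpMatrix, Fintype.sum_sum_type,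
    Pi.zero_apply, ite_mul, one_mul, zero_mul, neg_one_mul] at hrow1
  rw [Finset.sum_ite_eq' Finset.univ i (fun i' => -y (Sum.inr (Sum.inl i')))] at hrow1
  simp at hrow1
  -- hrow1 : ∑_{j : s j = i} y (inl j) - y (inr inl i) = 0
  have hsum : 0 < ∑ j ∈ Finset.univ.filter (fun j => s j = i), y (Sum.inl j) := by
    rw [Finset.sum_filter]
    omega
  obtain ⟨k, hk, hkpos⟩ : ∃ k ∈ Finset.univ.filter (fun j => s j = i), 0 < y (Sum.inl k) := by
    by_contra h
    push_neg at h
    have : ∑ j ∈ Finset.univ.filter (fun j => s j = i), y (Sum.inl j) ≤ 0 :=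
      Finset.sum_nonpos h
    omega
  simp at hk
  have hrow2 := congrFun hy (Sum.inr (Sum.inl k))
  simp only [Matrix.mulVec, dotProduct, lrpMatrix, Fintype.sum_sum_type,
    Pi.zero_apply, ite_mul, one_mul, zero_mul] at hrow2
  rw [Finset.sum_ite_eq' Finset.univ k (fun j => y (Sum.inl j)),
    Finset.sum_ite_eq' Finset.univ k (fun j => y (Sum.inr (Sum.inr (Sum.inl j))))] at hrow2
  simp at hrow2
  refine ⟨k, hk, hkpos, by omega, by omega, by omega, by omega⟩
end

section
/- The set G = {x_{ik} d_i − t_{ik} b^{c_{ik}}} ∪ {x_{iq} t_{ip} − x_{ip} t_{iq} b^{c_{iq}−c_{ip}} : q < p} is a Gröbner basis of the toric ideal I_A with respect to the elimination-type term order with x > d > t > b (and lexicographic within blocks): for every binomial z^{y⁺} − z^{y⁻} ∈ I_A with y ≠ 0, its initial term is divisible by the initial term of some element of G. -/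
/-- Rank of the variables of (LRP) in the elimination order
`x > d > t > b`, lexicographic within blocks (smaller rank = larger variable). -/
def varRank {n N : ℕ} : Fin N ⊕ (Fin n ⊕ (Fin N ⊕ Unit)) → ℕ
  | Sum.inl j => (j : ℕ)
  | Sum.inr (Sum.inl i) => N + (i : ℕ)
  | Sum.inr (Sum.inr (Sum.inl j)) => N + n + (j : ℕ)
  | Sum.inr (Sum.inr (Sum.inr _)) => N + n + N

/-- `α >_lex β` in the variable order given by `varRank`. -/
def lexGt {n N : ℕ} (α β : Fin N ⊕ (Fin n ⊕ (Fin N ⊕ Unit)) → ℕ) : Prop :=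
  ∃ v, β v < α v ∧ ∀ w, varRank (n := n) w < varRank v → α w = β w

/-- `G = {x_{ik} d_i - t_{ik} b^{c_{ik}}} ∪ {x_{iq} t_{ip} - x_{ip} t_{iq}
b^{c_{iq}-c_{ip}} : q < p}` is a Gröbner basis of the toric ideal `I_A` of the
(LRP) matrix for the elimination order `x > d > t > b`: for every nonzero
integer kernel element `y` of `A` whose initial monomial is `z^{y⁺}`, the
initial term of the binomial `z^{y⁺} - z^{y⁻}` is divisible by the initial
term `x_{ik} d_i` or `x_{iq} t_{ip}` of some element of `G`. -/
theorem groebner_basis_divisibility {n N : ℕ} (s : Fin N → Fin n) (c : Fin N → ℕ)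
    (hc : ∀ j, 0 < c j)
    (hsort : ∀ q p : Fin N, q < p → s p = s q → c p ≤ c q)
    (y : Fin N ⊕ (Fin n ⊕ (Fin N ⊕ Unit)) → ℤ)
    (hy : (lrpMatrix s c).mulVec y = 0) (hy0 : y ≠ 0)
    (hinit : lexGt (n := n) (fun v => (y v).toNat) (fun v => (-(y v)).toNat)) :
    (∃ kk : Fin N, 1 ≤ (y (Sum.inl kk)).toNat ∧
        1 ≤ (y (Sum.inr (Sum.inl (s kk)))).toNat) ∨
    (∃ q p : Fin N, q < p ∧ s p = s q ∧
        1 ≤ (y (Sum.inl q)).toNat ∧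
        1 ≤ (y (Sum.inr (Sum.inr (Sum.inl p)))).toNat) := by
  obtain ⟨v, hvlt, hprev⟩ := hinit
  simp only at hvlt hprev
  have hvpos : 0 < y v := by omega
  have hzero : ∀ w, varRank (n := n) w < varRank (n := n) v → y w = 0 := by
    intro w hw
    have := hprev w hw
    omega
  have hub : ∀ j : Fin N, y (Sum.inl j) + y (Sum.inr (Sum.inr (Sum.inl j))) = 0 := by
    intro j
    have h := congrFun hy (Sum.inr (Sum.inl j))
    simp only [Matrix.mulVec, dotProduct, Fintype.sum_sum_type, Pi.zero_apply, lrpMatrix,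
      ite_mul, one_mul, zero_mul, neg_mul, Finset.sum_ite_eq', Finset.mem_univ, if_true,
      Finset.sum_const_zero, add_zero, zero_add] at h
    linarith
  have hsub : ∀ i : Fin n,
      (∑ j' ∈ Finset.univ.filter (fun j' => s j' = i), y (Sum.inl j')) =
        y (Sum.inr (Sum.inl i)) := by
    intro i
    have h := congrFun hy (Sum.inl i)
    simp only [Matrix.mulVec, dotProduct, Fintype.sum_sum_type, Pi.zero_apply, lrpMatrix,
      ite_mul, one_mul, zero_mul, neg_mul, Finset.sum_ite_eq', Finset.mem_univ, if_true,
      Finset.sum_const_zero, add_zero, zero_add] at h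
    rw [← Finset.sum_filter] at h
    linarith
  rcases v with j | i | j | u
  · -- leading variable is x_j
    by_cases hd : 0 < y (Sum.inr (Sum.inl (s j)))
    · exact Or.inl ⟨j, by omega, by omega⟩
    · right
      have hj : j ∈ Finset.univ.filter (fun j' => s j' = s j) := by simp
      have hsum : y (Sum.inl j) +
          ∑ p ∈ (Finset.univ.filter (fun j' => s j' = s j)).erase j, y (Sum.inl p) =
          y (Sum.inr (Sum.inl (s j))) := by
        rw [Finset.add_sum_erase _ (fun j' => y (Sum.inl j')) hj, hsub]
      have hneg : ∃ p ∈ (Finset.univ.filter (fun j' => s j' = s j)).erase j,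
          y (Sum.inl p) < 0 := by
        by_contra hpos
        push_neg at hpos
        have h2 : (0:ℤ) ≤
            ∑ p ∈ (Finset.univ.filter (fun j' => s j' = s j)).erase j, y (Sum.inl p) :=
          Finset.sum_nonneg fun p hp => hpos p hp
        omega
      obtain ⟨p, hp, hpneg⟩ := hneg
      rw [Finset.mem_erase, Finset.mem_filter] at hp
      have hsp : s p = s j := hp.2.2
      have hjp : j < p := by
        rcases lt_trichotomy j p with h | h | h
        · exact h
        · exact absurd h.symm hp.1
        · exfalso
          have := hzero (Sum.inl p) (by simpa [varRank] using h)
          omega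
      have htp := hub p
      exact ⟨j, p, hjp, hsp, by omega, by omega⟩
  · -- leading variable is d_i : impossible
    exfalso
    have hx : ∀ j' : Fin N, y (Sum.inl j') = 0 := by
      intro j'
      exact hzero (Sum.inl j') (by simp only [varRank]; have := j'.isLt; omega)
    have := hsub i
    rw [Finset.sum_eq_zero fun j' _ => hx j'] at this
    omega
  · -- leading variable is t_j : impossible
    exfalso
    have hx : y (Sum.inl j) = 0 :=
      hzero (Sum.inl j) (by simp only [varRank]; have := j.isLt; omega)
    have := hub j
    omega
  · -- leading variable is b : impossible
    exfalso
    have hx : ∀ j' : Fin N, y (Sum.inl j') = 0 := by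
      intro j'
      exact hzero (Sum.inl j') (by simp only [varRank]; have := j'.isLt; omega)
    have h := congrFun hy (Sum.inr (Sum.inr u))
    simp only [Matrix.mulVec, dotProduct, Fintype.sum_sum_type, Pi.zero_apply, lrpMatrix,
      mul_zero, zero_mul, one_mul, Finset.sum_const_zero, add_zero, zero_add] at h
    rw [Finset.sum_eq_zero fun j' _ => by rw [hx j', mul_zero]] at h
    simp at h
    have : y (Sum.inr (Sum.inr (Sum.inr u))) = 0 := by
      cases u; exact h
    omega
end

section
/- The Gröbner basis G = {x_{ik} d_i − t_{ik} b^{c_{ik}}} ∪ {x_{iq} t_{ip} − x_{ip} t_{iq} b^{c_{iq}−c_{ip}} : q < p} of I_A is reduced: each leading term has coefficient 1, and no monomial appearing in any g ∈ G lies in the monomial ideal generated by the leading terms of the other elements of G. -/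
/-- The exponent vector of a single (LRP) variable. -/
def expOf {n N : ℕ} (v : Fin N ⊕ (Fin n ⊕ (Fin N ⊕ Unit))) :
    (Fin N ⊕ (Fin n ⊕ (Fin N ⊕ Unit))) → ℕ :=
  fun w => if w = v then 1 else 0

/-- The Gröbner basis `G`, encoded as the set of pairs
(leading-monomial exponent, trailing-monomial exponent) of its binomials
`x_{ik} d_i - t_{ik} b^{c_{ik}}` and
`x_{iq} t_{ip} - x_{ip} t_{iq} b^{c_{iq}-c_{ip}}` (`q < p`, same subsystem). -/
def lrpGB {n N : ℕ} (s : Fin N → Fin n) (c : Fin N → ℕ) :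
    Set ((((Fin N ⊕ (Fin n ⊕ (Fin N ⊕ Unit))) → ℕ) ×
         (((Fin N ⊕ (Fin n ⊕ (Fin N ⊕ Unit))) → ℕ)))) :=
  {g | (∃ kk : Fin N,
          g = (expOf (Sum.inl kk) + expOf (Sum.inr (Sum.inl (s kk))),
               expOf (Sum.inr (Sum.inr (Sum.inl kk))) +
                 fun w => c kk * expOf (n := n) (N := N) (Sum.inr (Sum.inr (Sum.inr ()))) w)) ∨
       (∃ q p : Fin N, q < p ∧ s p = s q ∧
          g = (expOf (Sum.inl q) + expOf (Sum.inr (Sum.inr (Sum.inl p))),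
               expOf (Sum.inl p) + expOf (Sum.inr (Sum.inr (Sum.inl q))) +
                 fun w => (c q - c p) * expOf (n := n) (N := N) (Sum.inr (Sum.inr (Sum.inr ()))) w))}

/-- The Gröbner basis `G` is reduced: no monomial appearing in an element of
`G` is divisible by the leading monomial of a different element of `G`
(divisibility of monomials being componentwise `≤` of exponent vectors). -/
theorem lrpGB_reduced {n N : ℕ} (s : Fin N → Fin n) (c : Fin N → ℕ)
    (hc : ∀ j, 1 ≤ c j)
    (hsort : ∀ q p : Fin N, q < p → s p = s q → c p ≤ c q) :
    ∀ g ∈ lrpGB s c, ∀ g' ∈ lrpGB s c, g' ≠ g →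
      (¬ ∀ w, g'.1 w ≤ g.1 w) ∧ (¬ ∀ w, g'.1 w ≤ g.2 w) := by
  intro g hg g' hg' hne
  rcases hg with ⟨kk, rfl⟩ | ⟨q, p, hqp, hs, rfl⟩
  · rcases hg' with ⟨kk', rfl⟩ | ⟨q', p', hqp', hs', rfl⟩
    · have hkk : kk' ≠ kk := by rintro rfl; exact hne rfl
      constructor
      · intro h
        have := h (Sum.inl kk')
        simp [expOf, hkk] at this
      · intro h
        have := h (Sum.inl kk')
        simp [expOf] at this
    · constructor
      · by_cases hq : q' = kk
        · intro h
          have := h (Sum.inr (Sum.inr (Sum.inl p')))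
          simp [expOf] at this
        · intro h
          have := h (Sum.inl q')
          simp [expOf, hq] at this
      · intro h
        have := h (Sum.inl q')
        simp [expOf] at this
  · rcases hg' with ⟨kk', rfl⟩ | ⟨q', p', hqp', hs', rfl⟩
    · constructor
      · intro h
        have := h (Sum.inr (Sum.inl (s kk')))
        simp [expOf] at this
      · intro h
        have := h (Sum.inr (Sum.inl (s kk')))
        simp [expOf] at this
    · constructor
      · by_cases hq : q' = q
        · by_cases hp : p' = p
          · subst hq; subst hp; exact absurd rfl hne
          · intro h
            have := h (Sum.inr (Sum.inr (Sum.inl p')))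
            simp [expOf, hp] at this
        · intro h
          have := h (Sum.inl q')
          simp [expOf, hq] at this
      · by_cases hq'p : q' = p
        · have hp'q : p' ≠ q := by
            rintro rfl
            exact absurd (hqp.trans (hq'p ▸ hqp')) (lt_irrefl _)
          intro h
          have := h (Sum.inr (Sum.inr (Sum.inl p')))
          simp [expOf, hp'q] at this
        · intro h
          have := h (Sum.inl q')
          simp [expOf, hq'p] at this
end
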